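/- arXiv:2406.17251 — 2 statements merged into one kernel-verified Lean document; each statement's English description precedes it below -/
import Mathlib

section
/- If (b₁,d₁) and (b₂,d₂) satisfy b₁ < d₁, b₂ < d₂, then the sup-norm distance between their tent functions satisfies sup_t |Λ₁(t) − Λ₂(t)| ≤ max(|b₁ − b₂|, |d₁ − d₂|). -/
theorem tent_dist_le_linfty_general (b₁ d₁ b₂ d₂ : ℝ) (t : ℝ) :
    |max 0 (min (t - b₁) (d₁ - t)) - max 0 (min (t - b₂) (d₂ - t))| ≤
      max |b₁ - b₂| |d₁ - d₂| :=
  calc |max 0 (min (t - b₁) (d₁ - t)) - max 0 (min (t - b₂) (d₂ - t))|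
      ≤ |min (t - b₁) (d₁ - t) - min (t - b₂) (d₂ - t)| := by
        simpa only [max_comm (0 : ℝ)] using abs_max_sub_max_le_abs _ _ 0
    _ ≤ max |t - b₁ - (t - b₂)| |d₁ - t - (d₂ - t)| := abs_min_sub_min_le_max _ _ _ _
    _ = max |b₁ - b₂| |d₁ - d₂| := by
        rw [sub_sub_sub_cancel_left, abs_sub_comm, sub_sub_sub_cancel_right]

theorem tent_dist_le_linfty (b₁ d₁ b₂ d₂ : ℝ) (h₁ : b₁ < d₁) (h₂ : b₂ < d₂) (t : ℝ) :
    |max 0 (min (t - b₁) (d₁ - t)) - max 0 (min (t - b₂) (d₂ - t))| ≤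
      max |b₁ - b₂| |d₁ - d₂| :=
  tent_dist_le_linfty_general b₁ d₁ b₂ d₂ t
end

section
/- For b < d and 1 ≤ p < ∞, the L^p norm of the tent function Λ_{(b,d)} equals ((d−b)/2)^{1 + 1/p} · (2/(p+1))^{1/p}. -/
/-! Outside `(b, d)` the tent vanishes, and on each half of `[b, d]` it is a translate or a
reflection of `x ↦ x` on `[0, h]`, `h = (d - b) / 2`. Hence `∫ Λ ^ p = 2 ∫₀ʰ xᵖ dx =
h ^ (p + 1) * (2 / (p + 1))`, and taking the `p`-th root gives the claim. -/

open Real MeasureTheory Set intervalIntegral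

noncomputable def tent (b d t : ℝ) : ℝ := max 0 (min (t - b) (d - t))

section Tent

variable {b d t : ℝ}

lemma tent_eq_zero_of_notMem_Ioo (ht : t ∉ Ioo b d) : tent b d t = 0 := by
  rw [mem_Ioo, not_and_or, not_lt, not_lt] at ht
  refine max_eq_left ?_
  rcases ht with ht | ht
  · exact (min_le_left _ _).trans (by linarith)
  · exact (min_le_right _ _).trans (by linarith)

lemma tent_eq_sub_left (hb : b ≤ t) (hm : t ≤ (b + d) / 2) : tent b d t = t - b := by
  rw [tent, min_eq_left (by linarith), max_eq_right (by linarith)]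

lemma tent_eq_sub_right (hm : (b + d) / 2 ≤ t) (hd : t ≤ d) : tent b d t = d - t := by
  rw [tent, min_eq_right (by linarith), max_eq_right (by linarith)]

lemma continuous_tent (b d : ℝ) : Continuous (tent b d) := by
  unfold tent
  fun_prop

variable (p : ℝ)

lemma integral_tent_rpow_left_half (hbd : b ≤ d) :
    ∫ t in b..(b + d) / 2, tent b d t ^ p = ∫ x in (0 : ℝ)..(d - b) / 2, x ^ p := by
  have hb : b ≤ (b + d) / 2 := by linarith
  calc ∫ t in b..(b + d) / 2, tent b d t ^ p
      = ∫ t in b..(b + d) / 2, (t - b) ^ p := by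
        refine integral_congr fun t ht => ?_
        rw [uIcc_of_le hb] at ht
        rw [tent_eq_sub_left ht.1 ht.2]
    _ = ∫ x in (0 : ℝ)..(d - b) / 2, x ^ p := by
        rw [integral_comp_sub_right (· ^ p), sub_self]
        ring_nf

lemma integral_tent_rpow_right_half (hbd : b ≤ d) :
    ∫ t in (b + d) / 2..d, tent b d t ^ p = ∫ x in (0 : ℝ)..(d - b) / 2, x ^ p := by
  have hd : (b + d) / 2 ≤ d := by linarith
  calc ∫ t in (b + d) / 2..d, tent b d t ^ p
      = ∫ t in (b + d) / 2..d, (d - t) ^ p := by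
        refine integral_congr fun t ht => ?_
        rw [uIcc_of_le hd] at ht
        rw [tent_eq_sub_right ht.1 ht.2]
    _ = ∫ x in (0 : ℝ)..(d - b) / 2, x ^ p := by
        rw [integral_comp_sub_left (· ^ p), sub_self]
        ring_nf

theorem integral_tent_rpow (hbd : b ≤ d) (hp : 0 < p) :
    ∫ t, tent b d t ^ p = ((d - b) / 2) ^ (p + 1) * (2 / (p + 1)) := by
  have hvanish : ∀ t ∉ Ioc b d, tent b d t ^ p = 0 := fun t ht => by
    rw [tent_eq_zero_of_notMem_Ioo (fun h => ht (Ioo_subset_Ioc_self h)), zero_rpow hp.ne']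
  have hint : ∀ a c, IntervalIntegrable (fun t => tent b d t ^ p) volume a c := fun _ _ =>
    ((continuous_tent b d).rpow_const fun _ => Or.inr hp.le).intervalIntegrable _ _
  rw [← setIntegral_eq_integral_of_forall_compl_eq_zero hvanish, ← integral_of_le hbd,
    ← integral_add_adjacent_intervals (hint b ((b + d) / 2)) (hint _ d),
    integral_tent_rpow_left_half p hbd, integral_tent_rpow_right_half p hbd,
    integral_rpow (Or.inl (by linarith)), zero_rpow (by linarith)]
  ring

end Tent

open Real in
theorem tent_lp_norm (b d : ℝ) (hbd : b < d) (p : ℝ) (hp : 1 ≤ p) :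
    (∫ t : ℝ, (max 0 (min (t - b) (d - t))) ^ p) ^ (1 / p)
      = ((d - b) / 2) ^ (1 + 1 / p) * (2 / (p + 1)) ^ (1 / p) := by
  have hp0 : 0 < p := by linarith
  have hh : 0 ≤ (d - b) / 2 := by linarith
  have hint : ∫ t : ℝ, (max 0 (min (t - b) (d - t))) ^ p
      = ((d - b) / 2) ^ (p + 1) * (2 / (p + 1)) := integral_tent_rpow p hbd.le hp0
  rw [hint, mul_rpow (rpow_nonneg hh _) (by positivity),
    ← rpow_mul hh]
  congr 2
  field_simp
end
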